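/- Let (S, Σ, {τ_a : a ∈ L}) be an LMP, set Σ₀ := σ(⟦𝓛⟧) and Σ_α := G^α(Σ₀). Then for every limit ordinal λ, the σ-algebra Σ_λ is stable. -/

import Mathlib

/-!
Every `Σ_α` is a π-system of measurable sets that are closed for `R^T(Σ_α)`, and the chain
`α ↦ Σ_α` is increasing. For `B ∈ Σ_β` the sets `{s | c < τ_a(s, B)}` are measurable and
`R^T(Σ_β)`-closed, i.e. they lie in `Σ_{β+1}`. Hence at a limit `λ` the maps `s ↦ τ_a(s, B)` are
`Σ_λ`-measurable for `B` in the π-system `⋃_{β<λ} Σ_β` generating `Σ_λ`, and the π-λ theorem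
extends this to every `B ∈ Σ_λ`.
-/

open MeasureTheory

/-- A labelled Markov process over the measurable space `S` with label set `L`:
each `τ a` is a Markov kernel, i.e. `τ a s` is a subprobability measure for each state `s`,
and `s ↦ τ a s E` is measurable for each measurable `E`. -/
structure LMP (S : Type*) (L : Type*) [MeasurableSpace S] where
  τ : L → S → Measure S
  prob_le_one : ∀ (a : L) (s : S), τ a s Set.univ ≤ 1
  measurable_eval : ∀ (a : L) (E : Set S), MeasurableSet E → Measurable fun s => τ a s E

namespace LMP

variable {S L : Type*} [MeasurableSpace S]

/-- `A` is `R`-closed: anything related to a point of `A` lies in `A`. -/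
def RClosed (R : Set (S × S)) (A : Set S) : Prop :=
  ∀ ⦃x⦄, x ∈ A → ∀ ⦃s⦄, (x, s) ∈ R → s ∈ A

/-- `Σ(R)`: the family of measurable `R`-closed sets. -/
def sigmaCl (R : Set (S × S)) : Set (Set S) :=
  {A | MeasurableSet A ∧ RClosed R A}

/-- `R(Λ)`: the relation identifying states belonging to exactly the same members of `Λ`. -/
def rel (Λ : Set (Set S)) : Set (S × S) :=
  {p | ∀ A ∈ Λ, p.1 ∈ A ↔ p.2 ∈ A}

/-- `R^T(Λ)`: states assigning the same probabilities to every member of `Λ`, for all labels. -/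
def relT (M : LMP S L) (Λ : Set (Set S)) : Set (S × S) :=
  {p | ∀ (a : L), ∀ E ∈ Λ, M.τ a p.1 E = M.τ a p.2 E}

/-- The operator `𝒪`. -/
def Oop (M : LMP S L) (R : Set (S × S)) : Set (S × S) :=
  M.relT (sigmaCl R)

/-- The operator `𝒢`. -/
def Gop (M : LMP S L) (Λ : Set (Set S)) : Set (Set S) :=
  sigmaCl (M.relT Λ)

/-- The members of the σ-algebra generated by a family of sets. -/
def sigmaGen (U : Set (Set S)) : Set (Set S) :=
  {A | MeasurableSet[MeasurableSpace.generateFrom U] A}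

/-- Transfinite iterates of `𝒪`. -/
noncomputable def Oiter (M : LMP S L) (R : Set (S × S)) (α : Ordinal) : Set (S × S) :=
  Ordinal.limitRecOn α R (fun _ prev => M.Oop prev)
    (fun o _ ih => ⋂ (o' : Ordinal) (h : o' < o), ih o' h)

/-- Transfinite iterates of `𝒢`. -/
noncomputable def Giter (M : LMP S L) (Λ : Set (Set S)) (α : Ordinal) : Set (Set S) :=
  Ordinal.limitRecOn α Λ (fun _ prev => M.Gop prev)
    (fun o _ ih => sigmaGen (⋃ (o' : Ordinal) (h : o' < o), ih o' h))

/-- `Λ` is a sub-σ-algebra of the ambient σ-algebra. -/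
structure IsSubSigmaAlgebra (Λ : Set (Set S)) : Prop where
  subset_meas : ∀ A ∈ Λ, MeasurableSet A
  empty_mem : (∅ : Set S) ∈ Λ
  compl_mem : ∀ A ∈ Λ, Aᶜ ∈ Λ
  iUnion_mem : ∀ f : ℕ → Set S, (∀ n, f n ∈ Λ) → (⋃ n, f n) ∈ Λ

/-- A family `Λ` is stable w.r.t. the process. -/
def Stable (M : LMP S L) (Λ : Set (Set S)) : Prop :=
  ∀ A ∈ Λ, ∀ q : ℚ, 0 ≤ q → q ≤ 1 → ∀ a : L,
    {s : S | ENNReal.ofReal (q : ℝ) < M.τ a s A} ∈ Λ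

/-- A state bisimulation: a symmetric relation such that related states agree on
all measurable `R`-closed sets. -/
def IsStateBisim (M : LMP S L) (R : Set (S × S)) : Prop :=
  (∀ p ∈ R, (p.2, p.1) ∈ R) ∧
    ∀ p ∈ R, ∀ (a : L), ∀ C ∈ sigmaCl R, M.τ a p.1 C = M.τ a p.2 C

/-- State bisimilarity. -/
def stateBisim (M : LMP S L) : Set (S × S) :=
  {p | ∃ R, M.IsStateBisim R ∧ p ∈ R}

/-- Event bisimilarity: related by `R(Λ)` for some stable sub-σ-algebra `Λ`. -/
def eventBisim (M : LMP S L) : Set (S × S) :=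
  {p | ∃ Λ : Set (Set S), IsSubSigmaAlgebra Λ ∧ M.Stable Λ ∧ p ∈ rel Λ}

/-- Formulas of the modal logic `𝓛`. -/
inductive LForm (L : Type*) : Type _
  | top : LForm L
  | and : LForm L → LForm L → LForm L
  | dia : L → {q : ℚ // 0 ≤ q ∧ q < 1} → LForm L → LForm L

/-- Semantics of the logic `𝓛`. -/
def sem (M : LMP S L) : LForm L → Set S
  | LForm.top => Set.univ
  | LForm.and φ ψ => M.sem φ ∩ M.sem ψ
  | LForm.dia a q φ => {s | ENNReal.ofReal ((q : ℚ) : ℝ) < M.τ a s (M.sem φ)}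

/-- `σ(⟦𝓛⟧)`: the σ-algebra generated by the sets definable in the logic. -/
def sigmaLogic (M : LMP S L) : Set (Set S) :=
  sigmaGen (Set.range M.sem)

end LMP

open MeasureTheory MeasurableSpace Set Order

theorem measurable_measure_apply_of_isPiSystem {α β : Type*} {mα : MeasurableSpace α}
    [MeasurableSpace β] {μ : α → Measure β} [∀ a, IsFiniteMeasure (μ a)] {U : Set (Set β)}
    (hU : ∀ B ∈ U, MeasurableSet B) (hpi : IsPiSystem U)
    (h_basic : ∀ B ∈ U, Measurable fun a ↦ μ a B) (h_univ : Measurable fun a ↦ μ a univ)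
    {B : Set β} (hB : MeasurableSet[generateFrom U] B) : Measurable fun a ↦ μ a B := by
  have hle : generateFrom U ≤ ‹_› := generateFrom_le hU
  have htrim : ∀ a {C}, MeasurableSet[generateFrom U] C → (μ a).trim hle C = μ a C :=
    fun a _ hC ↦ trim_measurableSet_eq hle hC
  have hν : Measurable fun a ↦ (μ a).trim hle :=
    @Measurable.measure_of_isPiSystem _ _ _ (generateFrom U) _ _ U rfl hpi
      (fun C hC ↦ by simpa only [htrim _ (measurableSet_generateFrom hC)] using h_basic C hC)
      (by simpa only [htrim _ (@MeasurableSet.univ _ (generateFrom U))] using h_univ)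
  simpa only [Function.comp_def, htrim _ hB] using
    (@Measure.measurable_coe _ (generateFrom U) _ hB).comp hν

namespace LMP

variable {S L : Type*} [MeasurableSpace S] (M : LMP S L)

instance (a : L) (s : S) : IsFiniteMeasure (M.τ a s) :=
  ⟨(M.prob_le_one a s).trans_lt ENNReal.one_lt_top⟩

lemma relT_symm {Λ : Set (Set S)} {x y : S} (h : (x, y) ∈ M.relT Λ) : (y, x) ∈ M.relT Λ :=
  fun a E hE ↦ (h a E hE).symm

lemma relT_antitone : Antitone M.relT :=
  fun _ _ h _ hp a E hE ↦ hp a E (h hE)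

lemma Gop_mono : Monotone M.Gop :=
  fun _ _ h _ hA ↦ ⟨hA.1, fun _ hx _ hxs ↦ hA.2 hx (M.relT_antitone h hxs)⟩

abbrev GopSpace (Λ : Set (Set S)) : MeasurableSpace S where
  MeasurableSet' A := A ∈ M.Gop Λ
  measurableSet_empty := ⟨.empty, fun _ hx ↦ hx.elim⟩
  measurableSet_compl A hA := ⟨hA.1.compl, fun _ hx _ hxs hs ↦ hx (hA.2 hs (M.relT_symm hxs))⟩
  measurableSet_iUnion f hf := ⟨.iUnion fun n ↦ (hf n).1, by
    simp only [RClosed, mem_iUnion]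
    exact fun _ ⟨n, hn⟩ _ hxs ↦ ⟨n, (hf n).2 hn hxs⟩⟩

lemma isPiSystem_Gop (Λ : Set (Set S)) : IsPiSystem (M.Gop Λ) :=
  @isPiSystem_measurableSet _ (M.GopSpace Λ)

lemma univ_mem_Gop (Λ : Set (Set S)) : univ ∈ M.Gop Λ :=
  @MeasurableSet.univ _ (M.GopSpace Λ)

lemma setOf_lt_τ_mem_Gop {Λ : Set (Set S)} {E : Set S} (hE : MeasurableSet E) (hEΛ : E ∈ Λ)
    (a : L) (c : ENNReal) : {s | c < M.τ a s E} ∈ M.Gop Λ :=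
  ⟨measurableSet_lt measurable_const (M.measurable_eval a E hE),
    fun x hx s hxs ↦ by rwa [mem_ofPred_eq, ← hxs a E hEΛ]⟩

lemma measurable_τ_apply {Λ U : Set (Set S)} {E : Set S} (hE : MeasurableSet E) (hEΛ : E ∈ Λ)
    (hU : M.Gop Λ ⊆ U) (a : L) : Measurable[generateFrom U] fun s ↦ M.τ a s E :=
  measurable_of_Ioi (mδ := generateFrom U) fun c ↦
    measurableSet_generateFrom (hU (M.setOf_lt_τ_mem_Gop hE hEΛ a c))

lemma sem_mem_Gop_sigmaLogic (φ : LForm L) : M.sem φ ∈ M.Gop M.sigmaLogic := by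
  induction φ with
  | top => exact M.univ_mem_Gop _
  | and φ ψ hφ hψ => exact @MeasurableSet.inter _ (M.GopSpace _) _ _ hφ hψ
  | dia a q φ hφ =>
    exact M.setOf_lt_τ_mem_Gop (Λ := M.sigmaLogic) hφ.1 (measurableSet_generateFrom ⟨φ, rfl⟩) a _

lemma sigmaLogic_subset_Gop : M.sigmaLogic ⊆ M.Gop M.sigmaLogic :=
  generateFrom_le (m := M.GopSpace _) (by rintro _ ⟨φ, rfl⟩; exact M.sem_mem_Gop_sigmaLogic φ)

lemma isPiSystem_sigmaLogic : IsPiSystem M.sigmaLogic :=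
  @isPiSystem_measurableSet _ (generateFrom _)

section Giter

variable (Λ : Set (Set S))

lemma Giter_zero : M.Giter Λ 0 = Λ :=
  Ordinal.limitRecOn_zero _ _ _

lemma Giter_add_one (α : Ordinal) : M.Giter Λ (α + 1) = M.Gop (M.Giter Λ α) :=
  Ordinal.limitRecOn_add_one _ _ _ _

lemma Giter_of_isSuccLimit {α : Ordinal} (hα : IsSuccLimit α) :
    M.Giter Λ α = sigmaGen (⋃ β < α, M.Giter Λ β) :=
  Ordinal.limitRecOn_limit _ _ _ _ hα

lemma Giter_subset_of_isSuccLimit {α β : Ordinal} (hα : IsSuccLimit α) (hβ : β < α) :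
    M.Giter Λ β ⊆ M.Giter Λ α := by
  rw [M.Giter_of_isSuccLimit Λ hα]
  exact fun A hA ↦ measurableSet_generateFrom (mem_biUnion hβ hA)

variable {Λ}

lemma Giter_subset_Gop_Giter (hΛ : Λ ⊆ M.Gop Λ) (α : Ordinal) :
    M.Giter Λ α ⊆ M.Gop (M.Giter Λ α) := by
  induction α using Ordinal.limitRecOn with
  | zero => rwa [M.Giter_zero]
  | add_one α ih => rw [M.Giter_add_one]; exact M.Gop_mono ih
  | limit α hα ih =>
    have h : ∀ β < α, M.Giter Λ β ⊆ M.Gop (M.Giter Λ α) := fun β hβ ↦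
      (ih β hβ).trans (M.Gop_mono (M.Giter_subset_of_isSuccLimit Λ hα hβ))
    conv_lhs => rw [M.Giter_of_isSuccLimit Λ hα]
    exact generateFrom_le (m := M.GopSpace _) (iUnion₂_subset h)

lemma measurableSet_of_mem_Giter (hΛ : Λ ⊆ M.Gop Λ) {α : Ordinal} {A : Set S}
    (hA : A ∈ M.Giter Λ α) : MeasurableSet A :=
  (M.Giter_subset_Gop_Giter hΛ α hA).1

lemma Giter_mono (hΛ : Λ ⊆ M.Gop Λ) : Monotone (M.Giter Λ) := by
  intro α β hαβ
  induction β using Ordinal.limitRecOn with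
  | zero => rw [nonpos_iff_eq_zero.1 hαβ]
  | add_one β ih =>
    rcases hαβ.lt_or_eq with h | rfl
    · rw [M.Giter_add_one]
      exact (ih (Order.lt_add_one_iff.1 h)).trans (M.Giter_subset_Gop_Giter hΛ β)
    · rfl
  | limit β hβ _ =>
    rcases hαβ.lt_or_eq with h | rfl
    · exact M.Giter_subset_of_isSuccLimit Λ hβ h
    · rfl

lemma isPiSystem_Giter (hΛ : IsPiSystem Λ) (α : Ordinal) : IsPiSystem (M.Giter Λ α) := by
  rcases Ordinal.zero_or_succ_or_isSuccLimit α with rfl | ⟨β, rfl⟩ | hα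
  · rwa [M.Giter_zero]
  · rw [succ_eq_add_one, M.Giter_add_one]; exact M.isPiSystem_Gop _
  · rw [M.Giter_of_isSuccLimit Λ hα]; exact @isPiSystem_measurableSet _ (generateFrom _)

lemma isPiSystem_biUnion_Giter (hΛ : Λ ⊆ M.Gop Λ) (hpi : IsPiSystem Λ) (α : Ordinal) :
    IsPiSystem (⋃ β < α, M.Giter Λ β) := by
  rintro A hA B hB hAB
  simp only [mem_iUnion₂] at hA hB ⊢
  obtain ⟨β, hβ, hA⟩ := hA
  obtain ⟨γ, hγ, hB⟩ := hB
  exact ⟨max β γ, max_lt hβ hγ, M.isPiSystem_Giter hpi _ A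
    (M.Giter_mono hΛ (le_max_left _ _) hA) B (M.Giter_mono hΛ (le_max_right _ _) hB) hAB⟩

theorem stable_Giter_of_isSuccLimit (hΛ : Λ ⊆ M.Gop Λ) (hpi : IsPiSystem Λ) {lam : Ordinal}
    (hlam : IsSuccLimit lam) : M.Stable (M.Giter Λ lam) := by
  set U := ⋃ β < lam, M.Giter Λ β
  have hU : ∀ B ∈ U, MeasurableSet B := by
    simp only [U, mem_iUnion₂]
    rintro B ⟨β, -, hB⟩
    exact M.measurableSet_of_mem_Giter hΛ hB
  have hGop : ∀ β < lam, M.Gop (M.Giter Λ β) ⊆ U := fun β hβ ↦ by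
    rw [← M.Giter_add_one]
    exact subset_biUnion_of_mem (u := M.Giter Λ) (hlam.add_one_lt hβ)
  have h_basic : ∀ B ∈ U, ∀ a, Measurable[generateFrom U] fun s ↦ M.τ a s B := by
    simp only [U, mem_iUnion₂]
    rintro B ⟨β, hβ, hB⟩ a
    exact M.measurable_τ_apply (M.measurableSet_of_mem_Giter hΛ hB) hB (hGop β hβ) a
  have huniv : univ ∈ U := hGop 0 hlam.pos (M.univ_mem_Gop _)
  intro A hA q _ _ a
  rw [M.Giter_of_isSuccLimit Λ hlam] at hA ⊢
  exact measurable_measure_apply_of_isPiSystem hU (M.isPiSystem_biUnion_Giter hΛ hpi lam)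
    (fun B hB ↦ h_basic B hB a) (h_basic univ huniv a) hA measurableSet_Ioi

end Giter

end LMP

open LMP in
theorem stable_Giter_sigmaLogic_of_isLimit_general
    {S L : Type*} [MeasurableSpace S]
    (M : LMP S L) (lam : Ordinal) (hlam : Order.IsSuccLimit lam) :
    M.Stable (M.Giter M.sigmaLogic lam) :=
  M.stable_Giter_of_isSuccLimit M.sigmaLogic_subset_Gop M.isPiSystem_sigmaLogic hlam

open LMP in
/-- With `Σ₀ := σ(⟦𝓛⟧)` and `Σ_α := 𝒢^α(Σ₀)`, the σ-algebra `Σ_λ` is stable for every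
limit ordinal `λ`. -/
theorem stable_Giter_sigmaLogic_of_isLimit
    {S L : Type*} [MeasurableSpace S] [Countable L]
    (M : LMP S L) (lam : Ordinal) (hlam : Order.IsSuccLimit lam) :
    M.Stable (M.Giter M.sigmaLogic lam) :=
  stable_Giter_sigmaLogic_of_isLimit_general M lam hlam
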